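/- For the sampled Gaussian mechanism with sampling rate q ∈ [0,1] and noise σ > 0, and integer α ≥ 2, the quantity A_α(q,σ) = E_{z∼ν₀}[((1−q)ν₀(z) + qν₁(z))/ν₀(z))^α], where ν₀ = N(0,σ²) and ν₁ = N(1,σ²), equals the binomial expansion ∑_{k=0}^{α} C(α,k)(1−q)^{α−k} q^k exp((k² − k)/(2σ²)). -/

import Mathlib

open Real

/-- Density of `N(0, σ²)`. -/
noncomputable def nu0 (σ z : ℝ) : ℝ :=
  (Real.sqrt (2 * π * σ ^ 2))⁻¹ * Real.exp (-z ^ 2 / (2 * σ ^ 2))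

/-- Density of `N(1, σ²)`. -/
noncomputable def nu1 (σ z : ℝ) : ℝ :=
  (Real.sqrt (2 * π * σ ^ 2))⁻¹ * Real.exp (-(z - 1) ^ 2 / (2 * σ ^ 2))

/-!
Writing `r = ν₁ / ν₀`, the integrand is `((1 - q) + q r)^α ν₀`, which the binomial theorem
expands into `∑ C(α,k) (1 - q)^(α-k) q^k r^k ν₀`. Completing the square shows that
`r^k ν₀ = exp ((k² - k) / (2σ²)) ν_k` with `ν_k = N(k, σ²)`, so integrating term by term
leaves exactly the constants `exp ((k² - k) / (2σ²))`.
-/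

open MeasureTheory ProbabilityTheory Finset
open scoped NNReal

lemma integral_mixture_div_pow_mul {Ω : Type*} [MeasurableSpace Ω] (μ : Measure Ω)
    {p₀ p₁ : Ω → ℝ} (hp₀ : ∀ᵐ x ∂μ, p₀ x ≠ 0) (q : ℝ) (n : ℕ)
    (hint : ∀ k ∈ range (n + 1), Integrable (fun x ↦ (p₁ x / p₀ x) ^ k * p₀ x) μ) :
    ∫ x, (((1 - q) * p₀ x + q * p₁ x) / p₀ x) ^ n * p₀ x ∂μ =
      ∑ k ∈ range (n + 1),
        (n.choose k : ℝ) * (1 - q) ^ (n - k) * q ^ k * ∫ x, (p₁ x / p₀ x) ^ k * p₀ x ∂μ := by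
  have hexpand : ∀ᵐ x ∂μ, (((1 - q) * p₀ x + q * p₁ x) / p₀ x) ^ n * p₀ x =
      ∑ k ∈ range (n + 1),
        (n.choose k : ℝ) * (1 - q) ^ (n - k) * q ^ k * ((p₁ x / p₀ x) ^ k * p₀ x) := by
    filter_upwards [hp₀] with x hx
    have hsplit : ((1 - q) * p₀ x + q * p₁ x) / p₀ x = q * (p₁ x / p₀ x) + (1 - q) := by
      field_simp
      ring
    rw [hsplit, add_pow, sum_mul]
    refine sum_congr rfl fun k _ ↦ ?_
    ring
  rw [integral_congr_ae hexpand, integral_finsetSum _ fun k hk ↦ (hint k hk).const_mul _]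
  simp only [integral_const_mul]

lemma gaussianPDFReal_div_pow_mul (m : ℝ) {v : ℝ≥0} (hv : v ≠ 0) (k : ℕ) (x : ℝ) :
    (gaussianPDFReal m v x / gaussianPDFReal 0 v x) ^ k * gaussianPDFReal 0 v x =
      exp ((k ^ 2 - k) * m ^ 2 / (2 * v)) * gaussianPDFReal (k * m) v x := by
  simp only [gaussianPDFReal]
  rw [mul_div_mul_left _ _ (by positivity), ← exp_sub, ← exp_nat_mul, mul_left_comm,
    ← exp_add]
  conv_rhs => rw [mul_left_comm, ← exp_add]
  congr 2
  field_simp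
  ring

lemma integrable_gaussianPDFReal_div_pow_mul (m : ℝ) {v : ℝ≥0} (hv : v ≠ 0) (k : ℕ) :
    Integrable (fun x ↦ (gaussianPDFReal m v x / gaussianPDFReal 0 v x) ^ k *
      gaussianPDFReal 0 v x) := by
  simp only [gaussianPDFReal_div_pow_mul m hv]
  exact (integrable_gaussianPDFReal _ _).const_mul _

lemma integral_gaussianPDFReal_div_pow_mul (m : ℝ) {v : ℝ≥0} (hv : v ≠ 0) (k : ℕ) :
    ∫ x, (gaussianPDFReal m v x / gaussianPDFReal 0 v x) ^ k * gaussianPDFReal 0 v x =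
      exp ((k ^ 2 - k) * m ^ 2 / (2 * v)) := by
  simp only [gaussianPDFReal_div_pow_mul m hv]
  rw [integral_const_mul, integral_gaussianPDFReal_eq_one _ hv, mul_one]

lemma nu0_eq_gaussianPDFReal (σ : ℝ) : nu0 σ = gaussianPDFReal 0 ⟨σ ^ 2, sq_nonneg σ⟩ := by
  ext z
  simp only [gaussianPDFReal, sub_zero]
  rfl

lemma nu1_eq_gaussianPDFReal (σ : ℝ) : nu1 σ = gaussianPDFReal 1 ⟨σ ^ 2, sq_nonneg σ⟩ := by
  rfl

theorem sampled_gaussian_A_alpha_general (q σ : ℝ)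
    (hσ : 0 < σ) (α : ℕ) :
    (∫ z : ℝ, (((1 - q) * nu0 σ z + q * nu1 σ z) / nu0 σ z) ^ α * nu0 σ z) =
      ∑ k ∈ Finset.range (α + 1),
        (α.choose k : ℝ) * (1 - q) ^ (α - k) * q ^ k *
          Real.exp (((k : ℝ) ^ 2 - k) / (2 * σ ^ 2)) := by
  have hv : (⟨σ ^ 2, sq_nonneg σ⟩ : ℝ≥0) ≠ 0 :=
    ne_of_apply_ne ((↑) : ℝ≥0 → ℝ) (pow_ne_zero 2 hσ.ne')
  rw [nu0_eq_gaussianPDFReal, nu1_eq_gaussianPDFReal,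
    integral_mixture_div_pow_mul _ (ae_of_all _ fun x ↦ (gaussianPDFReal_pos _ _ x hv).ne') q α
      fun k _ ↦ integrable_gaussianPDFReal_div_pow_mul 1 hv k]
  refine sum_congr rfl fun k _ ↦ ?_
  rw [integral_gaussianPDFReal_div_pow_mul 1 hv, one_pow, mul_one]
  rfl

theorem sampled_gaussian_A_alpha (q σ : ℝ) (hq0 : 0 ≤ q) (hq1 : q ≤ 1)
    (hσ : 0 < σ) (α : ℕ) (hα : 2 ≤ α) :
    (∫ z : ℝ, (((1 - q) * nu0 σ z + q * nu1 σ z) / nu0 σ z) ^ α * nu0 σ z) =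
      ∑ k ∈ Finset.range (α + 1),
        (α.choose k : ℝ) * (1 - q) ^ (α - k) * q ^ k *
          Real.exp (((k : ℝ) ^ 2 - k) / (2 * σ ^ 2)) :=
  sampled_gaussian_A_alpha_general q σ hσ α
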